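/- Logarithmic Hardy inequality: let f be locally absolutely continuous on (0,∞) with ∫₀^∞ |f'(r)|² r dr < ∞. Then for every R > 0, (1/4) ∫₀^∞ |f(r) - f(R)|² / (r · log²(R/r)) dr ≤ ∫₀^∞ |f'(r)|² r dr. -/

import Mathlib

open MeasureTheory Set Filter Topology

open scoped ENNReal

/-! The substitutions `r = R e^{-t}` and `r = R e^{t}` map `(0, R)` and `(R, ∞)` onto `(0, ∞)`,
turning `dr / (r log²(R/r))` into `dt / t²` and `|f'(r)|² r dr` into `|g'(t)|² dt` for
`g(t) = f(R e^{∓t})`. Each half is therefore the classical Hardy inequality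
`∫₀^∞ |g(t) - g(0)|² / t² dt ≤ 4 ∫₀^∞ |g'|²`. This follows from the weighted Cauchy–Schwarz
bound `(∫₀^t |g'|)² ≤ 2 t^{1/2} ∫₀^t |g'(u)|² u^{1/2} du` and Tonelli, since
`∫_u^∞ 2 t^{-3/2} dt = 4 u^{-1/2}`.
-/

theorem ENNReal.sq_lintegral_mul_le {α : Type*} [MeasurableSpace α] {μ : Measure α}
    {f g : α → ℝ≥0∞} (hf : AEMeasurable f μ) (hg : AEMeasurable g μ) :
    (∫⁻ a, f a * g a ∂μ) ^ 2 ≤ (∫⁻ a, f a ^ 2 ∂μ) * ∫⁻ a, g a ^ 2 ∂μ := by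
  have hHolder := ENNReal.lintegral_mul_le_Lp_mul_Lq μ Real.HolderConjugate.two_two hf hg
  simp only [Pi.mul_apply, ENNReal.rpow_two] at hHolder
  calc (∫⁻ a, f a * g a ∂μ) ^ 2
      ≤ ((∫⁻ a, f a ^ 2 ∂μ) ^ (1 / 2 : ℝ) * (∫⁻ a, g a ^ 2 ∂μ) ^ (1 / 2 : ℝ)) ^ 2 := by gcongr
    _ = (∫⁻ a, f a ^ 2 ∂μ) * ∫⁻ a, g a ^ 2 ∂μ := by
      rw [mul_pow, ← ENNReal.rpow_natCast, ← ENNReal.rpow_natCast (_ ^ _), ← ENNReal.rpow_mul,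
        ← ENNReal.rpow_mul]
      norm_num

theorem lintegral_Ioo_rpow {a t : ℝ} (ha : -1 < a) (ht : 0 < t) :
    ∫⁻ u in Ioo 0 t, ENNReal.ofReal (u ^ a) = ENNReal.ofReal (t ^ (a + 1) / (a + 1)) := by
  rw [Measure.restrict_congr_set Ioo_ae_eq_Ioc, ← ofReal_integral_eq_lintegral_ofReal,
    ← intervalIntegral.integral_of_le ht.le, integral_rpow (Or.inl ha),
    Real.zero_rpow (by linarith), sub_zero]
  · exact (intervalIntegral.intervalIntegrable_rpow' ha).1
  · filter_upwards [ae_restrict_mem measurableSet_Ioc] with u hu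
    exact Real.rpow_nonneg hu.1.le _

theorem lintegral_Ioi_rpow {a c : ℝ} (ha : a < -1) (hc : 0 < c) :
    ∫⁻ t in Ioi c, ENNReal.ofReal (t ^ a) = ENNReal.ofReal (-c ^ (a + 1) / (a + 1)) := by
  rw [← ofReal_integral_eq_lintegral_ofReal (integrableOn_Ioi_rpow_of_lt ha hc),
    integral_Ioi_rpow_of_lt ha hc]
  filter_upwards [ae_restrict_mem measurableSet_Ioi] with t ht
  exact Real.rpow_nonneg (hc.trans ht).le _

theorem lintegral_Ioi_lintegral_Ioo_swap {F : ℝ → ℝ → ℝ≥0∞}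
    (hF : Measurable (Function.uncurry F)) (a : ℝ) :
    ∫⁻ t in Ioi a, ∫⁻ u in Ioo a t, F t u = ∫⁻ u in Ioi a, ∫⁻ t in Ioi u, F t u := by
  let G : ℝ × ℝ → ℝ≥0∞ := {p | p.2 < p.1}.indicator (Function.uncurry F)
  have hG : Measurable G := hF.indicator (measurableSet_lt measurable_snd measurable_fst)
  have inner_u : ∀ t, ∫⁻ u in Ioo a t, F t u = ∫⁻ u in Ioi a, G (t, u) := fun t => by
    rw [← Iio_inter_Ioi, ← Measure.restrict_restrict measurableSet_Iio,
      ← lintegral_indicator measurableSet_Iio]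
    rfl
  have inner_t : ∀ u ∈ Ioi a, ∫⁻ t in Ioi u, F t u = ∫⁻ t in Ioi a, G (t, u) := fun u hu => by
    rw [← inter_eq_left.2 (Ioi_subset_Ioi (le_of_lt hu)),
      ← Measure.restrict_restrict measurableSet_Ioi, ← lintegral_indicator measurableSet_Ioi]
    rfl
  rw [lintegral_congr inner_u,
    lintegral_lintegral_swap (f := fun t u => G (t, u)) hG.aemeasurable,
    setLIntegral_congr_fun measurableSet_Ioi inner_t]

theorem sq_lintegral_Ioo_le {h : ℝ → ℝ≥0∞} (hh : Measurable h) {t : ℝ} (ht : 0 < t) :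
    (∫⁻ u in Ioo 0 t, h u) ^ 2 ≤ ENNReal.ofReal (2 * t ^ (1 / 2 : ℝ)) *
      ∫⁻ u in Ioo 0 t, h u ^ 2 * ENNReal.ofReal (u ^ (1 / 2 : ℝ)) := by
  have hsq : ∀ u ∈ Ioo 0 t, ∀ a : ℝ, ENNReal.ofReal (u ^ a) ^ 2 = ENNReal.ofReal (u ^ (a * 2)) :=
    fun u hu a => by
      rw [← ENNReal.ofReal_pow (Real.rpow_nonneg hu.1.le a), Real.rpow_mul hu.1.le, Real.rpow_two]
  have hsplit : ∀ u ∈ Ioo 0 t,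
      h u = h u * ENNReal.ofReal (u ^ (1 / 4 : ℝ)) * ENNReal.ofReal (u ^ (-1 / 4 : ℝ)) :=
    fun u hu => by
      rw [mul_assoc, ← ENNReal.ofReal_mul (Real.rpow_nonneg hu.1.le _), ← Real.rpow_add hu.1]
      norm_num
  have hweight : ∫⁻ u in Ioo 0 t, (h u * ENNReal.ofReal (u ^ (1 / 4 : ℝ))) ^ 2
      = ∫⁻ u in Ioo 0 t, h u ^ 2 * ENNReal.ofReal (u ^ (1 / 2 : ℝ)) :=
    setLIntegral_congr_fun measurableSet_Ioo fun u hu => by rw [mul_pow, hsq u hu]; norm_num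
  have hkernel : ∫⁻ u in Ioo 0 t, ENNReal.ofReal (u ^ (-1 / 4 : ℝ)) ^ 2
      = ENNReal.ofReal (2 * t ^ (1 / 2 : ℝ)) := by
    rw [setLIntegral_congr_fun measurableSet_Ioo fun u hu => hsq u hu _,
      lintegral_Ioo_rpow (by norm_num) ht, show (-1 / 4 : ℝ) * 2 + 1 = 1 / 2 by norm_num]
    congr 1
    ring
  calc (∫⁻ u in Ioo 0 t, h u) ^ 2
      = (∫⁻ u in Ioo 0 t, h u * ENNReal.ofReal (u ^ (1 / 4 : ℝ)) *
          ENNReal.ofReal (u ^ (-1 / 4 : ℝ))) ^ 2 := by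
        rw [setLIntegral_congr_fun measurableSet_Ioo hsplit]
    _ ≤ (∫⁻ u in Ioo 0 t, (h u * ENNReal.ofReal (u ^ (1 / 4 : ℝ))) ^ 2) *
          ∫⁻ u in Ioo 0 t, ENNReal.ofReal (u ^ (-1 / 4 : ℝ)) ^ 2 :=
        ENNReal.sq_lintegral_mul_le (by fun_prop) (by fun_prop)
    _ = _ := by rw [hweight, hkernel, mul_comm]

theorem lintegral_hardy_le {h : ℝ → ℝ≥0∞} (hh : Measurable h) :
    ∫⁻ t in Ioi 0, (∫⁻ u in Ioo 0 t, h u) ^ 2 / ENNReal.ofReal t ^ 2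
      ≤ 4 * ∫⁻ t in Ioi 0, h t ^ 2 := by
  set w : ℝ → ℝ≥0∞ := fun u => h u ^ 2 * ENNReal.ofReal (u ^ (1 / 2 : ℝ))
  have hw : Measurable w := by fun_prop
  have hpointwise : ∀ t ∈ Ioi (0 : ℝ), (∫⁻ u in Ioo 0 t, h u) ^ 2 / ENNReal.ofReal t ^ 2
      ≤ ∫⁻ u in Ioo 0 t, 2 * ENNReal.ofReal (t ^ (-3 / 2 : ℝ)) * w u := by
    intro t ht
    have hdiv : ENNReal.ofReal (2 * t ^ (1 / 2 : ℝ)) / ENNReal.ofReal t ^ 2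
        = 2 * ENNReal.ofReal (t ^ (-3 / 2 : ℝ)) := by
      rw [← ENNReal.ofReal_pow ht.le, ← ENNReal.ofReal_div_of_pos (pow_pos ht 2),
        ← ENNReal.ofReal_ofNat 2, ← ENNReal.ofReal_mul zero_le_two, mul_div_assoc,
        ← Real.rpow_natCast, ← Real.rpow_sub ht]
      norm_num
    calc (∫⁻ u in Ioo 0 t, h u) ^ 2 / ENNReal.ofReal t ^ 2
        ≤ ENNReal.ofReal (2 * t ^ (1 / 2 : ℝ)) * (∫⁻ u in Ioo 0 t, w u) /
            ENNReal.ofReal t ^ 2 := by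
          gcongr
          exact sq_lintegral_Ioo_le hh ht
      _ = ∫⁻ u in Ioo 0 t, 2 * ENNReal.ofReal (t ^ (-3 / 2 : ℝ)) * w u := by
          rw [lintegral_const_mul _ hw, ← hdiv, ENNReal.div_eq_inv_mul, ENNReal.div_eq_inv_mul,
            mul_assoc]
  have hinner : ∀ u ∈ Ioi (0 : ℝ), ∫⁻ t in Ioi u, 2 * ENNReal.ofReal (t ^ (-3 / 2 : ℝ)) * w u
      = 4 * h u ^ 2 := by
    intro u hu
    rw [lintegral_mul_const _ (by fun_prop), lintegral_const_mul _ (by fun_prop),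
      lintegral_Ioi_rpow (by norm_num) hu]
    have hconst : ENNReal.ofReal (-u ^ (-3 / 2 + 1 : ℝ) / (-3 / 2 + 1)) *
        ENNReal.ofReal (u ^ (1 / 2 : ℝ)) = 2 := by
      rw [← ENNReal.ofReal_mul' (Real.rpow_nonneg hu.le _),
        show (-3 / 2 + 1 : ℝ) = -(1 / 2) by norm_num, Real.rpow_neg hu.le]
      have := (Real.rpow_pos_of_pos hu (1 / 2)).ne'
      field_simp
      norm_num
    calc 2 * ENNReal.ofReal (-u ^ (-3 / 2 + 1 : ℝ) / (-3 / 2 + 1)) * w u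
        = 2 * (ENNReal.ofReal (-u ^ (-3 / 2 + 1 : ℝ) / (-3 / 2 + 1)) *
            ENNReal.ofReal (u ^ (1 / 2 : ℝ))) * h u ^ 2 := by ring
      _ = 4 * h u ^ 2 := by rw [hconst]; norm_num
  calc ∫⁻ t in Ioi 0, (∫⁻ u in Ioo 0 t, h u) ^ 2 / ENNReal.ofReal t ^ 2
      ≤ ∫⁻ t in Ioi 0, ∫⁻ u in Ioo 0 t, 2 * ENNReal.ofReal (t ^ (-3 / 2 : ℝ)) * w u :=
        setLIntegral_mono' measurableSet_Ioi hpointwise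
    _ = ∫⁻ u in Ioi 0, ∫⁻ t in Ioi u, 2 * ENNReal.ofReal (t ^ (-3 / 2 : ℝ)) * w u :=
        lintegral_Ioi_lintegral_Ioo_swap (by fun_prop) 0
    _ = ∫⁻ u in Ioi 0, 4 * h u ^ 2 := setLIntegral_congr_fun measurableSet_Ioi hinner
    _ = 4 * ∫⁻ t in Ioi 0, h t ^ 2 := lintegral_const_mul _ (by fun_prop)

theorem lintegral_image_mul_exp {R c : ℝ} (hR : 0 < R) (hc : c ≠ 0) {s : Set ℝ}
    (hs : MeasurableSet s) (g : ℝ → ℝ≥0∞) :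
    ∫⁻ r in (fun t => R * Real.exp (c * t)) '' s, g r
      = ∫⁻ t in s, ENNReal.ofReal (|c| * (R * Real.exp (c * t))) * g (R * Real.exp (c * t)) := by
  have hderiv : ∀ t, HasDerivAt (fun t => R * Real.exp (c * t)) (c * (R * Real.exp (c * t))) t :=
    fun t => (((hasDerivAt_id t).const_mul c).exp.const_mul R).congr_deriv
      (by simp only [id]; ring)
  have hinj : Function.Injective (fun t => R * Real.exp (c * t)) := fun t u htu =>
    mul_left_cancel₀ hc (Real.exp_injective (mul_left_cancel₀ hR.ne' htu))
  rw [lintegral_image_eq_lintegral_abs_deriv_mul hs (fun t _ => (hderiv t).hasDerivWithinAt)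
    hinj.injOn]
  simp only [abs_mul, abs_of_pos (mul_pos hR (Real.exp_pos _))]

theorem enorm_intervalIntegral_le_lintegral_image {E : Type*} [NormedAddCommGroup E]
    [NormedSpace ℝ E] (f : ℝ → E) {φ : ℝ → ℝ} {a b : ℝ} (hφ : ContinuousOn φ (uIcc a b)) :
    ‖∫ x in φ a..φ b, f x‖ₑ ≤ ∫⁻ x in φ '' uIcc a b, ‖f x‖ₑ :=
  calc ‖∫ x in φ a..φ b, f x‖ₑ = ‖∫ x in uIoc (φ a) (φ b), f x‖ₑ := by
        rw [← ofReal_norm, intervalIntegral.norm_integral_eq_norm_integral_uIoc, ofReal_norm]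
    _ ≤ ∫⁻ x in uIoc (φ a) (φ b), ‖f x‖ₑ := enorm_integral_le_lintegral_enorm _
    _ ≤ ∫⁻ x in φ '' uIcc a b, ‖f x‖ₑ :=
        lintegral_mono_set (uIoc_subset_uIcc.trans (intermediate_value_uIcc hφ))

theorem lintegral_log_hardy_image_mul_exp {E : Type*} [NormedAddCommGroup E] [NormedSpace ℝ E]
    {f f' : ℝ → E} (hf' : StronglyMeasurable f')
    (hFTC : ∀ s ∈ Ioi (0:ℝ), ∀ t ∈ Ioi (0:ℝ), f t - f s = ∫ r in s..t, f' r)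
    {R c : ℝ} (hR : 0 < R) (hc : |c| = 1) :
    ∫⁻ r in (fun t => R * Real.exp (c * t)) '' Ioi 0,
        ENNReal.ofReal (‖f r - f R‖ ^ 2 / (r * Real.log (R / r) ^ 2))
      ≤ 4 * ∫⁻ r in (fun t => R * Real.exp (c * t)) '' Ioi 0,
          ENNReal.ofReal (‖f' r‖ ^ 2 * r) := by
  set φ : ℝ → ℝ := fun t => R * Real.exp (c * t) with hφ_def
  have hφ_pos : ∀ t, 0 < φ t := fun t => mul_pos hR (Real.exp_pos _)
  have hsubst : ∀ {s : Set ℝ}, MeasurableSet s → ∀ g : ℝ → ℝ≥0∞,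
      ∫⁻ r in φ '' s, g r = ∫⁻ t in s, ENNReal.ofReal (φ t) * g (φ t) := fun hs g => by
    rw [lintegral_image_mul_exp hR (by rintro rfl; simp at hc) hs, hc]
    simp only [one_mul, φ]
  set h : ℝ → ℝ≥0∞ := fun u => ENNReal.ofReal (φ u) * ‖f' (φ u)‖ₑ
  have hh : Measurable h := by
    have : Continuous φ := by fun_prop
    exact ENNReal.measurable_ofReal.comp this.measurable |>.mul (hf'.enorm.comp this.measurable)
  have hbound : ∀ t ∈ Ioi (0:ℝ), ‖f (φ t) - f R‖ₑ ≤ ∫⁻ u in Ioo 0 t, h u := by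
    intro t ht
    have hφ0 : φ 0 = R := by simp [φ]
    have := enorm_intervalIntegral_le_lintegral_image f' (φ := φ) (a := 0) (b := t) (by fun_prop)
    rwa [uIcc_of_le (le_of_lt ht), hφ0, hsubst measurableSet_Icc,
      Measure.restrict_congr_set Ioo_ae_eq_Icc.symm, ← hFTC R hR _ (hφ_pos t)] at this
  have hlog : ∀ t, Real.log (R / φ t) ^ 2 = t ^ 2 := fun t => by
    rw [hφ_def, div_mul_cancel_left₀ hR.ne', ← Real.exp_neg, Real.log_exp, neg_sq, mul_pow,
      ← sq_abs c, hc, one_pow, one_mul]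
  calc ∫⁻ r in φ '' Ioi 0, ENNReal.ofReal (‖f r - f R‖ ^ 2 / (r * Real.log (R / r) ^ 2))
      = ∫⁻ t in Ioi 0, ‖f (φ t) - f R‖ₑ ^ 2 / ENNReal.ofReal t ^ 2 := by
        rw [hsubst measurableSet_Ioi]
        refine setLIntegral_congr_fun measurableSet_Ioi fun t ht => ?_
        rw [hlog, ← ENNReal.ofReal_mul (hφ_pos t).le, ← ofReal_norm,
          ← ENNReal.ofReal_pow (norm_nonneg _), ← ENNReal.ofReal_pow (le_of_lt ht),
          ← ENNReal.ofReal_div_of_pos (pow_pos ht 2)]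
        congr 1
        field_simp [(hφ_pos t).ne']
    _ ≤ ∫⁻ t in Ioi 0, (∫⁻ u in Ioo 0 t, h u) ^ 2 / ENNReal.ofReal t ^ 2 :=
        setLIntegral_mono' measurableSet_Ioi fun t ht => by gcongr; exact hbound t ht
    _ ≤ 4 * ∫⁻ t in Ioi 0, h t ^ 2 := lintegral_hardy_le hh
    _ = 4 * ∫⁻ r in φ '' Ioi 0, ENNReal.ofReal (‖f' r‖ ^ 2 * r) := by
        rw [hsubst measurableSet_Ioi]
        congr 1
        refine setLIntegral_congr_fun measurableSet_Ioi fun t _ => ?_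
        simp only [h]
        rw [← ofReal_norm, ← ENNReal.ofReal_mul (hφ_pos t).le,
          ← ENNReal.ofReal_pow (mul_nonneg (hφ_pos t).le (norm_nonneg _)),
          ← ENNReal.ofReal_mul (hφ_pos t).le]
        congr 1
        ring

theorem locallyIntegrableOn_Ioi_of_intervalIntegrable {E : Type*} [NormedAddCommGroup E]
    {f : ℝ → E} {a : ℝ}
    (hf : ∀ s ∈ Ioi a, ∀ t ∈ Ioi a, IntervalIntegrable f volume s t) :
    LocallyIntegrableOn f (Ioi a) := fun x hx => by
  have hx : a < x := hx
  exact ⟨Ioc ((a + x) / 2) (x + 1),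
    mem_nhdsWithin_of_mem_nhds (Ioc_mem_nhds (by linarith) (by linarith)),
    (hf _ (show a < (a + x) / 2 by linarith) _ (show a < x + 1 by linarith)).1⟩

theorem intervalIntegral_congr_ae_restrict_Ioi {E : Type*} [NormedAddCommGroup E]
    [NormedSpace ℝ E] {f g : ℝ → E} {a : ℝ} (hfg : f =ᵐ[volume.restrict (Ioi a)] g) {s t : ℝ}
    (hs : a < s) (ht : a < t) : ∫ r in s..t, f r = ∫ r in s..t, g r :=
  intervalIntegral.integral_congr_ae (((ae_restrict_iff' measurableSet_Ioi).1 hfg).mono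
    fun _ hr hrst => hr ((lt_min hs ht).trans hrst.1))

theorem lintegral_Ioi_eq_Ioo_add_Ioi (g : ℝ → ℝ≥0∞) {a b : ℝ} (hab : a ≤ b) :
    ∫⁻ x in Ioi a, g x = (∫⁻ x in Ioo a b, g x) + ∫⁻ x in Ioi b, g x := by
  rw [← Ioc_union_Ioi_eq_Ioi hab, lintegral_union measurableSet_Ioi Ioc_disjoint_Ioi_same,
    setLIntegral_congr Ioo_ae_eq_Ioc]

theorem image_mul_exp_neg_Ioi_zero {R : ℝ} (hR : 0 < R) :
    (fun t => R * Real.exp (-1 * t)) '' Ioi 0 = Ioo 0 R := by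
  have : (fun t => R * Real.exp (-1 * t)) = (R * ·) ∘ Real.exp ∘ Neg.neg := by
    funext t
    simp
  rw [this, image_comp, image_comp, image_neg_Ioi, neg_zero, Real.image_exp_Iio, Real.exp_zero,
    image_mul_left_Ioo hR, mul_zero, mul_one]

theorem image_mul_exp_Ioi_zero {R : ℝ} (hR : 0 < R) :
    (fun t => R * Real.exp (1 * t)) '' Ioi 0 = Ioi R := by
  have : (fun t => R * Real.exp (1 * t)) = (R * ·) ∘ Real.exp := by
    funext t
    simp
  rw [this, image_comp, Real.image_exp_Ioi, Real.exp_zero, image_mul_left_Ioi hR, mul_one]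

theorem stmt_5_general (f f' : ℝ → ℂ)
    (hloc : ∀ s ∈ Ioi (0:ℝ), ∀ t ∈ Ioi (0:ℝ), IntervalIntegrable f' volume s t)
    (hFTC : ∀ s ∈ Ioi (0:ℝ), ∀ t ∈ Ioi (0:ℝ), f t - f s = ∫ r in s..t, f' r) :
    ∀ R : ℝ, 0 < R →
      ENNReal.ofReal (1/4) *
          ∫⁻ r in Ioi (0:ℝ),
            ENNReal.ofReal (‖f r - f R‖^2 / (r * (Real.log (R / r))^2))
        ≤ ∫⁻ r in Ioi (0:ℝ), ENNReal.ofReal (‖f' r‖^2 * r) := by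
  intro R hR
  have hmeas := (locallyIntegrableOn_Ioi_of_intervalIntegrable hloc).aestronglyMeasurable
  -- Tonelli needs a strongly measurable representative of `f'`.
  obtain ⟨g, hg, hfg⟩ : ∃ g, StronglyMeasurable g ∧ f' =ᵐ[volume.restrict (Ioi 0)] g :=
    ⟨_, hmeas.stronglyMeasurable_mk, hmeas.ae_eq_mk⟩
  have hFTC_g : ∀ s ∈ Ioi (0:ℝ), ∀ t ∈ Ioi (0:ℝ), f t - f s = ∫ r in s..t, g r :=
    fun s hs t ht => (hFTC s hs t ht).trans (intervalIntegral_congr_ae_restrict_Ioi hfg hs ht)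
  have hlt := lintegral_log_hardy_image_mul_exp hg hFTC_g hR (c := -1) (by norm_num)
  have hgt := lintegral_log_hardy_image_mul_exp hg hFTC_g hR (c := 1) (by norm_num)
  rw [image_mul_exp_neg_Ioi_zero hR] at hlt
  rw [image_mul_exp_Ioi_zero hR] at hgt
  have hrhs : ∫⁻ r in Ioi (0:ℝ), ENNReal.ofReal (‖f' r‖ ^ 2 * r)
      = ∫⁻ r in Ioi (0:ℝ), ENNReal.ofReal (‖g r‖ ^ 2 * r) :=
    lintegral_congr_ae (hfg.mono fun r hr => by simp only [hr])
  rw [hrhs, lintegral_Ioi_eq_Ioo_add_Ioi _ hR.le, lintegral_Ioi_eq_Ioo_add_Ioi _ hR.le]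
  refine (mul_le_mul_right (add_le_add hlt hgt) _).trans_eq ?_
  rw [← mul_add, ← mul_assoc, ← ENNReal.ofReal_ofNat 4, ← ENNReal.ofReal_mul (by norm_num),
    show (1 / 4 : ℝ) * 4 = 1 by norm_num, ENNReal.ofReal_one, one_mul]

/-- Logarithmic Hardy inequality: if `f` is locally absolutely continuous on `(0,∞)` with
`∫₀^∞ |f'(r)|² r dr < ∞`, then for every `R > 0`,
`(1/4) ∫₀^∞ |f(r) - f(R)|² / (r log²(R/r)) dr ≤ ∫₀^∞ |f'(r)|² r dr`. -/
theorem stmt_5 (f f' : ℝ → ℂ)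
    (hloc : ∀ s ∈ Ioi (0:ℝ), ∀ t ∈ Ioi (0:ℝ), IntervalIntegrable f' volume s t)
    (hFTC : ∀ s ∈ Ioi (0:ℝ), ∀ t ∈ Ioi (0:ℝ), f t - f s = ∫ r in s..t, f' r)
    (hint : ∫⁻ r in Ioi (0:ℝ), ENNReal.ofReal (‖f' r‖^2 * r) < ⊤) :
    ∀ R : ℝ, 0 < R →
      ENNReal.ofReal (1/4) *
          ∫⁻ r in Ioi (0:ℝ),
            ENNReal.ofReal (‖f r - f R‖^2 / (r * (Real.log (R / r))^2))
        ≤ ∫⁻ r in Ioi (0:ℝ), ENNReal.ofReal (‖f' r‖^2 * r) :=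
  stmt_5_general f f' hloc hFTC
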